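/- arXiv:2211.14455 — 2 statements merged into one kernel-verified Lean document; each statement's English description precedes it below -/
import Mathlib

section
/- H-theorem for equilibrium flow: let x(t) solve the equilibrium flow ẋ = −S ∇Ψ*_x(Sᵀ(∇Φ(x) − ∇Φ(x̃))) in ℝ_{>0}^V. Then for all t, (d/dt) D[x(t)‖x̃] = −(Ψ*_{x(t)}(f(x(t))) + Ψ_{x(t)}(j(x(t)))) ≤ 0, where f(x) := Sᵀ(∇Φ(x) − ∇Φ(x̃)) and j(x) := ∇Ψ*_x(f(x)); the derivative vanishes at time t if and only if x(t) ∈ M^eq(x̃) := {x : Sᵀ(∇Φ(x) − ∇Φ(x̃)) = 0}. -/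
open Matrix Filter Set

noncomputable def grad {n : ℕ} (F : (Fin n → ℝ) → ℝ) (x : Fin n → ℝ) : Fin n → ℝ :=
  fun i => fderiv ℝ F x (Pi.single i 1)

def IsDissipation {n : ℕ} (Ψ : (Fin n → ℝ) → ℝ) : Prop :=
  StrictConvexOn ℝ Set.univ Ψ ∧ ContDiff ℝ 1 Ψ ∧
  Tendsto (fun f => Ψ f / ‖f‖) (Bornology.cobounded (Fin n → ℝ)) atTop ∧
  (∀ f, Ψ (-f) = Ψ f) ∧ Ψ 0 = 0

noncomputable def legendre {n : ℕ} (Ψ : (Fin n → ℝ) → ℝ) (j : Fin n → ℝ) : ℝ :=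
  ⨆ f : Fin n → ℝ, (j ⬝ᵥ f - Ψ f)

noncomputable def breg {n : ℕ} (F : (Fin n → ℝ) → ℝ) (x x' : Fin n → ℝ) : ℝ :=
  F x - F x' - (x - x') ⬝ᵥ grad F x'

def posOrth (n : ℕ) : Set (Fin n → ℝ) := {x | ∀ i, 0 < x i}

def IsThermo {n : ℕ} (Φ : (Fin n → ℝ) → ℝ) : Prop :=
  StrictConvexOn ℝ (posOrth n) Φ ∧
  (∀ x ∈ posOrth n, DifferentiableAt ℝ Φ x) ∧
  Set.BijOn (grad Φ) (posOrth n) Set.univ ∧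
  (∀ xin ∈ posOrth n, ∀ xbd ∈ frontier {x : Fin n → ℝ | ∀ i, 0 ≤ x i},
    Tendsto (fun lam : ℝ => deriv (fun l : ℝ => Φ (l • xin + (1 - l) • xbd)) lam)
      (nhdsWithin 0 (Set.Ioi 0)) atBot)

/-! Along the flow, `d/dt D[x‖x̃] = ⟨ẋ, ∇Φ(x) - ∇Φ(x̃)⟩ = -⟨S j, ∇Φ(x) - ∇Φ(x̃)⟩ = -⟨f, j⟩`.
Since `j = ∇Ψ*ₓ(f)`, the Fenchel–Young equality gives `⟨f, j⟩ = Ψ*ₓ(f) + Ψₓ(j)`. The gradient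
inequality of `Ψ*ₓ` at `0` gives `⟨f, j⟩ ≥ Ψ*ₓ(f)`, and an even strictly convex function vanishing
at `0` is positive off `0`; hence `⟨f, j⟩ ≥ 0`, with equality exactly when `f = 0`. -/

lemma fderiv_apply_eq_dotProduct_grad {n : ℕ} (F : (Fin n → ℝ) → ℝ) (x v : Fin n → ℝ) :
    fderiv ℝ F x v = v ⬝ᵥ grad F x := by
  conv_lhs => rw [pi_eq_sum_univ' v]
  simp [dotProduct, grad]

theorem ConvexOn.add_fderiv_sub_le {E : Type*} [NormedAddCommGroup E] [NormedSpace ℝ E]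
    {s : Set E} {ψ : E → ℝ} {ψ' : E →L[ℝ] ℝ} {a b : E} (hψ : ConvexOn ℝ s ψ) (ha : a ∈ s)
    (hb : b ∈ s) (hψ' : HasFDerivAt ψ ψ' a) : ψ a + ψ' (b - a) ≤ ψ b := by
  set γ : ℝ →ᵃ[ℝ] E := AffineMap.lineMap a b
  have hderiv : HasDerivAt (ψ ∘ γ) (ψ' (b - a)) 0 :=
    (by simpa [γ] using hψ' : HasFDerivAt ψ ψ' (γ 0)).comp_hasDerivAt 0
      AffineMap.hasDerivAt_lineMap
  have := (hψ.comp_affineMap γ).le_slope_of_hasDerivAt (by simpa [γ]) (by simpa [γ]) one_pos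
    hderiv
  simp only [slope_def_field, Function.comp_apply, AffineMap.lineMap_apply_one,
    AffineMap.lineMap_apply_zero, sub_zero, div_one, map_sub, γ] at this ⊢
  linarith

theorem StrictConvexOn.pos_of_ne_zero {E : Type*} [AddCommGroup E] [Module ℝ E] {ψ : E → ℝ}
    (hψ : StrictConvexOn ℝ univ ψ) (heven : ∀ f, ψ (-f) = ψ f) (hzero : ψ 0 = 0) {f : E}
    (hf : f ≠ 0) : 0 < ψ f := by
  have hne : f ≠ -f := fun h => by
    have h2 : (2 : ℝ) • f = 0 := by rw [two_smul]; nth_rewrite 2 [h]; exact add_neg_cancel f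
    exact hf ((smul_eq_zero.mp h2).resolve_left two_ne_zero)
  have := hψ.2 (mem_univ f) (mem_univ (-f)) hne (by norm_num : (0:ℝ) < 1/2)
    (by norm_num : (0:ℝ) < 1/2) (by norm_num)
  simp [hzero, heven] at this
  linarith

section Legendre

variable {n : ℕ} {ψ : (Fin n → ℝ) → ℝ}

theorem ConvexOn.add_dotProduct_grad_le (hc : ConvexOn ℝ univ ψ) (hd : Differentiable ℝ ψ)
    (a b : Fin n → ℝ) : ψ a + (b - a) ⬝ᵥ grad ψ a ≤ ψ b := by
  simpa only [fderiv_apply_eq_dotProduct_grad] using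
    hc.add_fderiv_sub_le (mem_univ a) (mem_univ b) (hd a).hasFDerivAt

theorem ConvexOn.legendre_grad (hc : ConvexOn ℝ univ ψ) (hd : Differentiable ℝ ψ)
    (f : Fin n → ℝ) : legendre ψ (grad ψ f) = f ⬝ᵥ grad ψ f - ψ f := by
  have hle : ∀ g, grad ψ f ⬝ᵥ g - ψ g ≤ f ⬝ᵥ grad ψ f - ψ f := fun g => by
    have := hc.add_dotProduct_grad_le hd f g
    rw [sub_dotProduct, dotProduct_comm g] at this
    linarith
  refine le_antisymm (ciSup_le hle) ?_
  rw [dotProduct_comm f]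
  exact le_ciSup ⟨_, forall_mem_range.mpr hle⟩ f

namespace IsDissipation

variable (hψ : IsDissipation ψ)
include hψ

theorem add_legendre_grad (f : Fin n → ℝ) : ψ f + legendre ψ (grad ψ f) = f ⬝ᵥ grad ψ f := by
  rw [hψ.1.convexOn.legendre_grad (hψ.2.1.differentiable one_ne_zero)]
  ring

theorem le_dotProduct_grad (f : Fin n → ℝ) : ψ f ≤ f ⬝ᵥ grad ψ f := by
  have := hψ.1.convexOn.add_dotProduct_grad_le (hψ.2.1.differentiable one_ne_zero) f 0
  rw [zero_sub, neg_dotProduct, hψ.2.2.2.2] at this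
  linarith

theorem dotProduct_grad_pos {f : Fin n → ℝ} (hf : f ≠ 0) : 0 < f ⬝ᵥ grad ψ f :=
  (hψ.1.pos_of_ne_zero hψ.2.2.2.1 hψ.2.2.2.2 hf).trans_le (hψ.le_dotProduct_grad f)

theorem dotProduct_grad_nonneg (f : Fin n → ℝ) : 0 ≤ f ⬝ᵥ grad ψ f := by
  rcases eq_or_ne f 0 with rfl | hf
  · rw [zero_dotProduct]
  · exact (hψ.dotProduct_grad_pos hf).le

theorem dotProduct_grad_eq_zero_iff {f : Fin n → ℝ} : f ⬝ᵥ grad ψ f = 0 ↔ f = 0 :=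
  ⟨fun h => by_contra fun hf => (hψ.dotProduct_grad_pos hf).ne' h,
    fun h => h ▸ zero_dotProduct _⟩

end IsDissipation

end Legendre

theorem HasDerivAt.breg {n : ℕ} {F : (Fin n → ℝ) → ℝ} {x : ℝ → Fin n → ℝ} {v : Fin n → ℝ}
    {t : ℝ} (hx : HasDerivAt x v t) (hF : DifferentiableAt ℝ F (x t)) (x' : Fin n → ℝ) :
    HasDerivAt (fun s => breg F (x s) x') (v ⬝ᵥ (grad F (x t) - grad F x')) t := by
  have hFx : HasDerivAt (fun s => F (x s)) (v ⬝ᵥ grad F (x t)) t := by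
    simpa only [fderiv_apply_eq_dotProduct_grad, Function.comp_def] using
      hF.hasFDerivAt.comp_hasDerivAt t hx
  have hlin : HasDerivAt (fun s => (x s - x') ⬝ᵥ grad F x') (v ⬝ᵥ grad F x') t := by
    simp only [dotProduct, Pi.sub_apply]
    exact HasDerivAt.fun_sum fun i _ =>
      ((hasDerivAt_pi.mp hx i).sub_const (x' i)).mul_const (grad F x' i)
  rw [dotProduct_sub]
  exact (hFx.sub_const (F x')).sub hlin

theorem h_theorem_for_equilibrium_flow_general {V E : ℕ}
    (S : Matrix (Fin V) (Fin E) ℝ)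
    (Φ : (Fin V → ℝ) → ℝ) (hΦ : IsThermo Φ)
    (Ψstar : (Fin V → ℝ) → (Fin E → ℝ) → ℝ)
    (hdiss : ∀ x ∈ posOrth V, IsDissipation (Ψstar x))
    (xtil : Fin V → ℝ)
    (x : ℝ → Fin V → ℝ)
    (hpos : ∀ t : ℝ, x t ∈ posOrth V)
    (hflow : ∀ t : ℝ,
      HasDerivAt x
        (-(S *ᵥ grad (Ψstar (x t)) (Sᵀ *ᵥ (grad Φ (x t) - grad Φ xtil)))) t) :
    ∀ t : ℝ,
      HasDerivAt (fun s => breg Φ (x s) xtil)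
        (-(Ψstar (x t) (Sᵀ *ᵥ (grad Φ (x t) - grad Φ xtil))
          + legendre (Ψstar (x t))
              (grad (Ψstar (x t)) (Sᵀ *ᵥ (grad Φ (x t) - grad Φ xtil))))) t ∧
      -(Ψstar (x t) (Sᵀ *ᵥ (grad Φ (x t) - grad Φ xtil))
          + legendre (Ψstar (x t))
              (grad (Ψstar (x t)) (Sᵀ *ᵥ (grad Φ (x t) - grad Φ xtil)))) ≤ 0 ∧
      (-(Ψstar (x t) (Sᵀ *ᵥ (grad Φ (x t) - grad Φ xtil))
          + legendre (Ψstar (x t))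
              (grad (Ψstar (x t)) (Sᵀ *ᵥ (grad Φ (x t) - grad Φ xtil)))) = 0 ↔
        Sᵀ *ᵥ (grad Φ (x t) - grad Φ xtil) = 0) := by
  intro t
  have hψ := hdiss (x t) (hpos t)
  rw [hψ.add_legendre_grad, neg_nonpos, neg_eq_zero, hψ.dotProduct_grad_eq_zero_iff]
  refine ⟨?_, hψ.dotProduct_grad_nonneg _, Iff.rfl⟩
  have hD := (hflow t).breg (hΦ.2.1 (x t) (hpos t)) xtil
  rwa [neg_dotProduct, dotProduct_comm, dotProduct_mulVec, ← mulVec_transpose]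
    at hD

/-- H-theorem for the equilibrium flow: along a solution,
d/dt D[x(t)‖x̃] = −(Ψ*ₓ(f(x)) + Ψₓ(j(x))) ≤ 0, vanishing iff x(t) ∈ M^eq(x̃). -/
theorem h_theorem_for_equilibrium_flow {V E : ℕ}
    (S : Matrix (Fin V) (Fin E) ℝ)
    (Φ : (Fin V → ℝ) → ℝ) (hΦ : IsThermo Φ)
    (Ψstar : (Fin V → ℝ) → (Fin E → ℝ) → ℝ)
    (hdiss : ∀ x ∈ posOrth V, IsDissipation (Ψstar x))
    (xtil : Fin V → ℝ) (hxtil : xtil ∈ posOrth V)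
    (x : ℝ → Fin V → ℝ)
    (hpos : ∀ t : ℝ, x t ∈ posOrth V)
    (hflow : ∀ t : ℝ,
      HasDerivAt x
        (-(S *ᵥ grad (Ψstar (x t)) (Sᵀ *ᵥ (grad Φ (x t) - grad Φ xtil)))) t) :
    ∀ t : ℝ,
      HasDerivAt (fun s => breg Φ (x s) xtil)
        (-(Ψstar (x t) (Sᵀ *ᵥ (grad Φ (x t) - grad Φ xtil))
          + legendre (Ψstar (x t))
              (grad (Ψstar (x t)) (Sᵀ *ᵥ (grad Φ (x t) - grad Φ xtil))))) t ∧
      -(Ψstar (x t) (Sᵀ *ᵥ (grad Φ (x t) - grad Φ xtil))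
          + legendre (Ψstar (x t))
              (grad (Ψstar (x t)) (Sᵀ *ᵥ (grad Φ (x t) - grad Φ xtil)))) ≤ 0 ∧
      (-(Ψstar (x t) (Sᵀ *ᵥ (grad Φ (x t) - grad Φ xtil))
          + legendre (Ψstar (x t))
              (grad (Ψstar (x t)) (Sᵀ *ᵥ (grad Φ (x t) - grad Φ xtil)))) = 0 ↔
        Sᵀ *ᵥ (grad Φ (x t) - grad Φ xtil) = 0) :=
  h_theorem_for_equilibrium_flow_general S Φ hΦ Ψstar hdiss xtil x hpos hflow
end

section
/- The minimizer of the dual dissipation function over an iso-force class is a steady (divergence-free) force: let Ψ* be a dissipation function on ℝ^E with conjugate Ψ, let S ∈ ℝ^{V×E}, and let V be a matrix whose columns form a basis of Ker S, so that Ker Vᵀ = Im Sᵀ. For any f₀ ∈ ℝ^E, the minimum of Ψ* over the affine set {f ∈ ℝ^E : Vᵀf = Vᵀf₀} = {f : f − f₀ ∈ Im Sᵀ} is attained at a unique point f◊, and f◊ satisfies S ∇Ψ*(f◊) = 0, i.e., the flux ∇Ψ*(f◊) lies in Ker S. -/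
/-!
A rank count gives `Ker Vᵀ = Im Sᵀ`, so the iso-force class is the closed affine space
`f₀ + Im Sᵀ`. Superlinear growth makes `Ψ*` coercive, so it attains its minimum there, and strict
convexity makes the minimizer unique. Since the class contains every line `f◊ + t Sᵀu`, the
minimizer is stationary along `Im Sᵀ`: `∇Ψ*(f◊)` is orthogonal to `Im Sᵀ`, i.e. lies in `Ker S`.
-/

open Matrix Filter Set

section LinearAlgebra

variable {K : Type*} [Field K] {l m n : Type*} [Fintype m] [Fintype n]

theorem Matrix.range_mulVecLin_transpose_eq_ker [Fintype l] {S : Matrix m n K} {W : Matrix n l K}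
    (h : LinearMap.range W.mulVecLin = LinearMap.ker S.mulVecLin) :
    LinearMap.range Sᵀ.mulVecLin = LinearMap.ker Wᵀ.mulVecLin := by
  classical
  have hSW : S * W = 0 := by
    ext i k
    have hcol : W *ᵥ Pi.single k 1 ∈ LinearMap.ker S.mulVecLin :=
      h ▸ LinearMap.mem_range_self _ _
    simpa [mulVec_single_one, mulVec, dotProduct, mul_apply] using
      congrFun (LinearMap.mem_ker.mp hcol) i
  apply Submodule.eq_of_le_of_finrank_eq
  · rintro _ ⟨u, rfl⟩
    simp [LinearMap.mem_ker, hSW]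
  · have hS := LinearMap.finrank_range_add_finrank_ker S.mulVecLin
    have hW := LinearMap.finrank_range_add_finrank_ker Wᵀ.mulVecLin
    have hSt : Sᵀ.rank = S.rank := rank_transpose S
    have hWt : Wᵀ.rank = W.rank := rank_transpose W
    rw [Matrix.rank, Matrix.rank, h] at hWt
    rw [Matrix.rank, Matrix.rank] at hSt
    omega

theorem Matrix.setOf_mulVec_eq_eq_setOf_sub_eq_mulVec {S : Matrix m n K} {W : Matrix n l K}
    (h : LinearMap.range Sᵀ.mulVecLin = LinearMap.ker Wᵀ.mulVecLin) (f₀ : n → K) :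
    {f | Wᵀ *ᵥ f = Wᵀ *ᵥ f₀} = {f | ∃ u, f - f₀ = Sᵀ *ᵥ u} := by
  ext f
  have : f - f₀ ∈ LinearMap.ker Wᵀ.mulVecLin ↔ Wᵀ *ᵥ f = Wᵀ *ᵥ f₀ := by
    simp only [LinearMap.mem_ker, mulVecLin_apply, mulVec_sub, sub_eq_zero]
  rw [mem_ofPred_eq, ← this, ← h]
  simp only [LinearMap.mem_range, mulVecLin_apply, mem_ofPred_eq, eq_comm]

end LinearAlgebra

section Minimization

variable {E : Type*} [NormedAddCommGroup E]

theorem tendsto_cobounded_atTop_of_superlinear {F : E → ℝ}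
    (hF : Tendsto (fun x => F x / ‖x‖) (Bornology.cobounded E) atTop) :
    Tendsto F (Bornology.cobounded E) atTop := by
  refine (hF.atTop_mul_atTop₀ tendsto_norm_cobounded_atTop).congr' ?_
  filter_upwards [tendsto_norm_cobounded_atTop.eventually_gt_atTop 0] with x hx
  exact div_mul_cancel₀ _ hx.ne'

theorem IsClosed.exists_isMinOn_of_tendsto_cobounded [ProperSpace E] {F : E → ℝ} {s : Set E}
    (hs : IsClosed s) (hne : s.Nonempty) (hF : Continuous F)
    (hFc : Tendsto F (Bornology.cobounded E) atTop) : ∃ x ∈ s, IsMinOn F s x := by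
  obtain ⟨x₀, hx₀⟩ := hne
  refine hF.continuousOn.exists_isMinOn' hs hx₀ ?_
  rw [← Metric.cobounded_eq_cocompact]
  exact (hFc.eventually_ge_atTop (F x₀)).filter_mono inf_le_left

variable [NormedSpace ℝ E]

theorem IsMinOn.fderiv_apply_eq_zero_of_add_smul_mem {F : E → ℝ} {s : Set E} {x d : E}
    (hmin : IsMinOn F s x) (hF : DifferentiableAt ℝ F x) (hd : ∀ t : ℝ, x + t • d ∈ s) :
    fderiv ℝ F x d = 0 := by
  have hline : HasDerivAt (fun t : ℝ => x + t • d) d 0 := by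
    simpa using ((hasDerivAt_id (0 : ℝ)).smul_const d).const_add x
  have hderiv : HasDerivAt (fun t : ℝ => F (x + t • d)) (fderiv ℝ F x d) 0 := by
    apply HasFDerivAt.comp_hasDerivAt _ _ hline
    simpa using hF.hasFDerivAt
  refine IsLocalMin.hasDerivAt_eq_zero (Eventually.of_forall fun t => ?_) hderiv
  simpa using hmin (hd t)

end Minimization

theorem dotProduct_grad {n : ℕ} (F : (Fin n → ℝ) → ℝ) (x v : Fin n → ℝ) :
    v ⬝ᵥ grad F x = fderiv ℝ F x v := by
  conv_rhs => rw [pi_eq_sum_univ' v]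
  simp only [map_sum, map_smul, smul_eq_mul, dotProduct, grad]

theorem mulVec_grad_eq_zero {m n : ℕ} {F : (Fin n → ℝ) → ℝ} {x : Fin n → ℝ}
    {S : Matrix (Fin m) (Fin n) ℝ} (h : ∀ u, fderiv ℝ F x (Sᵀ *ᵥ u) = 0) :
    S *ᵥ grad F x = 0 := by
  refine dotProduct_self_eq_zero.mp ?_
  rw [dotProduct_mulVec, ← mulVec_transpose, dotProduct_grad, h]

theorem iso_force_minimizer_is_steady_force_general {V E Z : ℕ}
    (S : Matrix (Fin V) (Fin E) ℝ)
    (Ψstar : (Fin E → ℝ) → ℝ) (h : IsDissipation Ψstar)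
    (Vm : Matrix (Fin E) (Fin Z) ℝ)
    (hVker : ∀ w : Fin Z → ℝ, S *ᵥ (Vm *ᵥ w) = 0)
    (hVspan : ∀ j : Fin E → ℝ, S *ᵥ j = 0 → ∃ w, Vm *ᵥ w = j)
    (f₀ : Fin E → ℝ) :
    ({f : Fin E → ℝ | Vmᵀ *ᵥ f = Vmᵀ *ᵥ f₀} =
      {f : Fin E → ℝ | ∃ u, f - f₀ = Sᵀ *ᵥ u}) ∧
    ∃ fd : Fin E → ℝ,
      (Vmᵀ *ᵥ fd = Vmᵀ *ᵥ f₀ ∧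
        ∀ f : Fin E → ℝ, Vmᵀ *ᵥ f = Vmᵀ *ᵥ f₀ → Ψstar fd ≤ Ψstar f) ∧
      (∀ f : Fin E → ℝ,
        (Vmᵀ *ᵥ f = Vmᵀ *ᵥ f₀ ∧
          ∀ f' : Fin E → ℝ, Vmᵀ *ᵥ f' = Vmᵀ *ᵥ f₀ → Ψstar f ≤ Ψstar f') → f = fd) ∧
      S *ᵥ grad Ψstar fd = 0 := by
  obtain ⟨hconv, hdiff, hcoer, -, -⟩ := h
  have hker : LinearMap.range Sᵀ.mulVecLin = LinearMap.ker Vmᵀ.mulVecLin := by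
    refine range_mulVecLin_transpose_eq_ker (le_antisymm ?_ hVspan)
    rintro _ ⟨w, rfl⟩
    exact hVker w
  set A := Vmᵀ.mulVecLin ⁻¹' {Vmᵀ *ᵥ f₀}
  have hA : IsClosed A := isClosed_singleton.preimage (LinearMap.continuous_of_finiteDimensional _)
  obtain ⟨fd, hfdA, hfd⟩ := hA.exists_isMinOn_of_tendsto_cobounded ⟨f₀, rfl⟩ hdiff.continuous
    (tendsto_cobounded_atTop_of_superlinear hcoer)
  refine ⟨setOf_mulVec_eq_eq_setOf_sub_eq_mulVec hker f₀, fd, ⟨hfdA, hfd⟩,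
    fun f ⟨hfA, hf⟩ => ?_, mulVec_grad_eq_zero fun u => ?_⟩
  · have hstrict : StrictConvexOn ℝ A Ψstar :=
      hconv.subset (subset_univ A) ((convex_singleton _).linear_preimage _)
    exact hstrict.eq_of_isMinOn hf hfd hfA hfdA
  · refine hfd.fderiv_apply_eq_zero_of_add_smul_mem (hdiff.differentiable one_ne_zero fd) ?_
    have hSu : Vmᵀ *ᵥ (Sᵀ *ᵥ u) = 0 :=
      LinearMap.mem_ker.mp (hker ▸ LinearMap.mem_range_self Sᵀ.mulVecLin u)
    intro t
    show Vmᵀ *ᵥ (fd + t • Sᵀ *ᵥ u) = Vmᵀ *ᵥ f₀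
    rw [mulVec_add, mulVec_smul, hSu, smul_zero, add_zero]
    exact hfdA

/-- The minimizer of the dual dissipation function over an iso-force class
{f : Vᵀf = Vᵀf₀} = {f : f − f₀ ∈ Im Sᵀ} exists, is unique, and is a steady (divergence-free)
force: S ∇Ψ*(f◊) = 0. -/
theorem iso_force_minimizer_is_steady_force {V E Z : ℕ}
    (S : Matrix (Fin V) (Fin E) ℝ)
    (Ψstar : (Fin E → ℝ) → ℝ) (h : IsDissipation Ψstar)
    (Vm : Matrix (Fin E) (Fin Z) ℝ)
    (hVker : ∀ w : Fin Z → ℝ, S *ᵥ (Vm *ᵥ w) = 0)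
    (hVspan : ∀ j : Fin E → ℝ, S *ᵥ j = 0 → ∃ w, Vm *ᵥ w = j)
    (hVinj : Function.Injective Vm.mulVec)
    (f₀ : Fin E → ℝ) :
    ({f : Fin E → ℝ | Vmᵀ *ᵥ f = Vmᵀ *ᵥ f₀} =
      {f : Fin E → ℝ | ∃ u, f - f₀ = Sᵀ *ᵥ u}) ∧
    ∃ fd : Fin E → ℝ,
      (Vmᵀ *ᵥ fd = Vmᵀ *ᵥ f₀ ∧
        ∀ f : Fin E → ℝ, Vmᵀ *ᵥ f = Vmᵀ *ᵥ f₀ → Ψstar fd ≤ Ψstar f) ∧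
      (∀ f : Fin E → ℝ,
        (Vmᵀ *ᵥ f = Vmᵀ *ᵥ f₀ ∧
          ∀ f' : Fin E → ℝ, Vmᵀ *ᵥ f' = Vmᵀ *ᵥ f₀ → Ψstar f ≤ Ψstar f') → f = fd) ∧
      S *ᵥ grad Ψstar fd = 0 :=
  iso_force_minimizer_is_steady_force_general S Ψstar h Vm hVker hVspan f₀
end
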